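/- Let q, b ∈ ℂ with |q| < 1, and suppose b q^j ≠ 1 for all integers j ≥ 0. Then ∑_{n=0}^∞ (-1)^n b^n q^{n(n-1)/2} = (q;q)_∞ (b;q)_∞ · ∑_{n=0}^∞ q^n / ((q;q)_n (b;q)_n), where both series converge absolutely. -/

import Mathlib

/-- The finite q-shifted factorial `(a;q)_n = ∏_{j=0}^{n-1} (1 - a q^j)`. -/
noncomputable def qPoch (q a : ℂ) (n : ℕ) : ℂ := ∏ j ∈ Finset.range n, (1 - a * q ^ j)

/-- The infinite q-shifted factorial `(a;q)_∞ = ∏_{j=0}^{∞} (1 - a q^j)`. -/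
noncomputable def qPochInf (q a : ℂ) : ℂ := ∏' j : ℕ, (1 - a * q ^ j)

/-!
Let `G(x) = ∑ₙ qⁿ (q^{n+1};q)_∞ (xqⁿ;q)_∞`; when no `(x;q)ₙ` vanishes this is
`(q;q)_∞ (x;q)_∞ ∑ₙ qⁿ / ((q;q)ₙ (x;q)ₙ)`, but `G` makes sense for every `x`. Peeling the first
factor off each infinite product turns `qⁿ⁺¹ Pₙ₊₁ + x qⁿ (q^{n+1};q)_∞ (xq^{n+1};q)_∞` into
`Pₙ₊₁ - Pₙ`, where `Pₙ = (q^{n+1};q)_∞ (xqⁿ;q)_∞ → 1`; summing gives `G(x) = 1 - x G(xq)`.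
Iterating, `G(x) = ∑_{k<N} (-1)ᵏ xᵏ q^{k(k-1)/2} + (-1)ᴺ xᴺ q^{N(N-1)/2} G(xqᴺ)`, and the
remainder tends to `0` because `|(a;q)_∞| ≤ exp(|a| / (1 - |q|))` bounds `G` on `|x| ≤ R`.
-/

open Filter Finset Topology

section Geometric

variable {K : Type*} [NormedDivisionRing K] {q : K}

lemma summable_norm_mul_pow_of_norm_lt_one (hq : ‖q‖ < 1) (a : K) :
    Summable fun j : ℕ ↦ ‖a * q ^ j‖ := by
  simpa only [norm_mul] using (summable_norm_geometric_of_norm_lt_one hq).mul_left ‖a‖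

lemma tsum_norm_mul_pow_of_norm_lt_one (hq : ‖q‖ < 1) (a : K) :
    ∑' j : ℕ, ‖a * q ^ j‖ = ‖a‖ / (1 - ‖q‖) := by
  simp only [norm_mul, norm_pow, tsum_mul_left, tsum_geometric_of_lt_one (norm_nonneg q) hq,
    div_eq_mul_inv]

lemma mul_pow_ne_one_of_norm_lt_one (hq : ‖q‖ < 1) (j : ℕ) : q * q ^ j ≠ 1 := by
  refine ne_of_apply_ne norm (ne_of_lt ?_)
  rw [← pow_succ', norm_pow, norm_one]
  exact pow_lt_one₀ (norm_nonneg q) hq j.succ_ne_zero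

end Geometric

lemma norm_tprod_one_add_le_exp {ι R : Type*} [NormedCommRing R] [NormOneClass R]
    [CompleteSpace R] {f : ι → R} (hf : Summable fun i ↦ ‖f i‖) :
    ‖∏' i, (1 + f i)‖ ≤ Real.exp (∑' i, ‖f i‖) := by
  refine le_of_tendsto' (tendsto_norm.comp (multipliable_one_add_of_summable hf).hasProd)
    fun s ↦ ?_
  calc ‖∏ i ∈ s, (1 + f i)‖
      ≤ ∏ i ∈ s, (1 + ‖f i‖) :=
        (Finset.norm_prod_le _ _).trans <| Finset.prod_le_prod (fun _ _ ↦ norm_nonneg _)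
          fun i _ ↦ (norm_add_le _ _).trans_eq (by rw [norm_one])
    _ ≤ Real.exp (∑ i ∈ s, ‖f i‖) := Real.prod_one_add_le_exp_sum s fun _ ↦ norm_nonneg _
    _ ≤ Real.exp (∑' i, ‖f i‖) :=
        Real.exp_le_exp.mpr (hf.sum_le_tsum s fun _ _ ↦ norm_nonneg _)

namespace qPochInf

variable {q : ℂ}

lemma multipliable (hq : ‖q‖ < 1) (a : ℂ) : Multipliable fun j : ℕ ↦ 1 - a * q ^ j := by
  simpa only [← sub_eq_add_neg] using
    multipliable_one_add_of_summable (f := fun j : ℕ ↦ -(a * q ^ j))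
      (by simpa only [norm_neg] using summable_norm_mul_pow_of_norm_lt_one hq a)

lemma eq_qPoch_mul (hq : ‖q‖ < 1) (a : ℂ) (n : ℕ) :
    qPochInf q a = qPoch q a n * qPochInf q (a * q ^ n) := by
  have hshift : (fun j ↦ 1 - a * q ^ (j + n)) = fun j ↦ 1 - a * q ^ n * q ^ j := by
    ext j; ring
  rw [qPochInf, qPoch, qPochInf, ← hshift]
  refine (Multipliable.prod_mul_tprod_nat_mul' ?_).symm
  rw [hshift]
  exact multipliable hq _

lemma eq_one_sub_mul (hq : ‖q‖ < 1) (a : ℂ) : qPochInf q a = (1 - a) * qPochInf q (a * q) := by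
  simpa [qPoch] using eq_qPoch_mul hq a 1

lemma norm_le (hq : ‖q‖ < 1) (a : ℂ) : ‖qPochInf q a‖ ≤ Real.exp (‖a‖ / (1 - ‖q‖)) := by
  have h := norm_tprod_one_add_le_exp (f := fun j : ℕ ↦ -(a * q ^ j))
    (by simpa only [norm_neg] using summable_norm_mul_pow_of_norm_lt_one hq a)
  simpa only [qPochInf, ← sub_eq_add_neg, norm_neg, tsum_norm_mul_pow_of_norm_lt_one hq] using h

lemma tendsto_mul_pow (hq : ‖q‖ < 1) (a : ℂ) :
    Tendsto (fun n : ℕ ↦ qPochInf q (a * q ^ n)) atTop (𝓝 1) := by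
  have h := tendsto_tprod_one_add_of_dominated_convergence (𝓕 := atTop) (g := fun _ : ℕ ↦ 0)
    (f := fun n j ↦ -(a * q ^ n * q ^ j)) (summable_norm_mul_pow_of_norm_lt_one hq a)
    (fun j ↦ ?_) ?_
  · simpa only [qPochInf, ← sub_eq_add_neg, mul_assoc, ← pow_add, add_zero, tprod_one] using h
  · simpa using
      (((tendsto_pow_atTop_nhds_zero_of_norm_lt_one hq).const_mul a).mul_const (q ^ j)).neg
  · refine Eventually.of_forall fun n j ↦ ?_
    simp only [norm_neg, norm_mul, norm_pow]
    gcongr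
    exact mul_le_of_le_one_right (norm_nonneg a) (pow_le_one₀ (norm_nonneg q) hq.le)

lemma ne_zero (hq : ‖q‖ < 1) {a : ℂ} (ha : ∀ j : ℕ, a * q ^ j ≠ 1) : qPochInf q a ≠ 0 := by
  simpa only [qPochInf, ← sub_eq_add_neg] using
    tprod_one_add_ne_zero_of_summable (f := fun j : ℕ ↦ -(a * q ^ j))
      (fun j ↦ by rw [← sub_eq_add_neg, sub_ne_zero]; exact (ha j).symm)
      (by simpa only [norm_neg] using summable_norm_mul_pow_of_norm_lt_one hq a)

end qPochInf

noncomputable def heineTerm (q x : ℂ) (n : ℕ) : ℂ :=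
  q ^ n * (qPochInf q (q ^ (n + 1)) * qPochInf q (x * q ^ n))

/-- The series `G(x)` above. -/
noncomputable def heineSeries (q x : ℂ) : ℂ := ∑' n : ℕ, heineTerm q x n

def partialThetaTerm (q x : ℂ) (n : ℕ) : ℂ := (-1) ^ n * x ^ n * q ^ (n * (n - 1) / 2)

section HeineSeries

variable {q : ℂ}

lemma norm_heineTerm_le (hq : ‖q‖ < 1) {x : ℂ} {R : ℝ} (hx : ‖x‖ ≤ R) (n : ℕ) :
    ‖heineTerm q x n‖ ≤
      ‖q‖ ^ n * (Real.exp (1 / (1 - ‖q‖)) * Real.exp (R / (1 - ‖q‖))) := by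
  have hpow : ∀ m : ℕ, ‖q‖ ^ m ≤ 1 := fun m ↦ pow_le_one₀ (norm_nonneg q) hq.le
  rw [heineTerm, norm_mul, norm_mul, norm_pow]
  gcongr
  · refine (qPochInf.norm_le hq _).trans (Real.exp_le_exp.mpr ?_)
    gcongr
    rw [norm_pow]; exact hpow _
  · refine (qPochInf.norm_le hq _).trans (Real.exp_le_exp.mpr ?_)
    gcongr
    rw [norm_mul, norm_pow]
    exact (mul_le_of_le_one_right (norm_nonneg x) (hpow n)).trans hx

lemma summable_heineTerm (hq : ‖q‖ < 1) (x : ℂ) : Summable (heineTerm q x) :=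
  .of_norm_bounded ((summable_geometric_of_lt_one (norm_nonneg q) hq).mul_right _)
    (norm_heineTerm_le hq le_rfl)

lemma norm_heineSeries_le (hq : ‖q‖ < 1) {x : ℂ} {R : ℝ} (hx : ‖x‖ ≤ R) :
    ‖heineSeries q x‖ ≤
      (1 - ‖q‖)⁻¹ * (Real.exp (1 / (1 - ‖q‖)) * Real.exp (R / (1 - ‖q‖))) := by
  rw [← tsum_geometric_of_lt_one (norm_nonneg q) hq, ← tsum_mul_right]
  exact tsum_of_norm_bounded
    ((summable_geometric_of_lt_one (norm_nonneg q) hq).mul_right _).hasSum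
    (norm_heineTerm_le hq hx)

lemma heineSeries_eq_one_sub (hq : ‖q‖ < 1) (x : ℂ) :
    heineSeries q x = 1 - x * heineSeries q (x * q) := by
  set P : ℕ → ℂ := fun n ↦ qPochInf q (q ^ (n + 1)) * qPochInf q (x * q ^ n) with hP
  have hP_succ : ∀ n, P n = (1 - q ^ (n + 1)) * (1 - x * q ^ n) * P (n + 1) := fun n ↦ by
    simp only [hP]
    rw [qPochInf.eq_one_sub_mul hq (q ^ (n + 1)), qPochInf.eq_one_sub_mul hq (x * q ^ n),
      ← pow_succ, mul_assoc x, ← pow_succ]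
    ring
  have hterm : ∀ n, heineTerm q x (n + 1) + x * heineTerm q (x * q) n = P (n + 1) - P n :=
    fun n ↦ by
      rw [hP_succ n, heineTerm, heineTerm, qPochInf.eq_one_sub_mul hq (q ^ (n + 1)), ← pow_succ,
        mul_assoc x q, ← pow_succ']
      ring
  have hP_lim : Tendsto P atTop (𝓝 1) := by
    simpa only [hP, ← pow_succ', mul_one] using
      (qPochInf.tendsto_mul_pow hq q).mul (qPochInf.tendsto_mul_pow hq x)
  have htele : HasSum (fun n ↦ P (n + 1) - P n) (1 - P 0) := by
    have hs : Summable fun n ↦ P (n + 1) - P n :=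
      (((summable_nat_add_iff 1).mpr (summable_heineTerm hq x)).add
        ((summable_heineTerm hq (x * q)).mul_left x)).congr hterm
    rw [hs.hasSum_iff_tendsto_nat]
    simpa only [Finset.sum_range_sub] using hP_lim.sub_const (P 0)
  have htail : HasSum (fun n ↦ heineTerm q x (n + 1)) (1 - P 0 - x * heineSeries q (x * q)) := by
    refine (htele.sub ((summable_heineTerm hq (x * q)).hasSum.mul_left x)).congr_fun fun n ↦ ?_
    linear_combination hterm n
  rw [heineSeries, ((hasSum_nat_add_iff 1).mp htail).tsum_eq]
  simp only [Finset.sum_range_one, heineTerm, hP, pow_zero, one_mul]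
  ring

lemma partialThetaTerm_succ (x : ℂ) (n : ℕ) :
    partialThetaTerm q x (n + 1) = -(x * q ^ n) * partialThetaTerm q x n := by
  rw [partialThetaTerm, partialThetaTerm, Nat.triangle_succ, pow_add]
  ring

lemma summable_partialThetaTerm (hq : ‖q‖ < 1) (x : ℂ) : Summable (partialThetaTerm q x) := by
  have hsmall : ∀ᶠ n : ℕ in atTop, ‖x‖ * ‖q‖ ^ n ≤ 1 / 2 := by
    have hlim := (tendsto_pow_atTop_nhds_zero_of_lt_one (norm_nonneg q) hq).const_mul ‖x‖
    rw [mul_zero] at hlim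
    exact hlim.eventually (eventually_le_nhds one_half_pos)
  refine summable_of_ratio_norm_eventually_le one_half_lt_one (hsmall.mono fun n hn ↦ ?_)
  rw [partialThetaTerm_succ, norm_mul, norm_neg, norm_mul, norm_pow]
  gcongr

lemma heineSeries_eq_sum_add (hq : ‖q‖ < 1) (x : ℂ) (N : ℕ) :
    heineSeries q x =
      ∑ k ∈ range N, partialThetaTerm q x k +
        partialThetaTerm q x N * heineSeries q (x * q ^ N) := by
  induction N with
  | zero => simp [partialThetaTerm]
  | succ N ih =>
    have hshift : x * q ^ N * q = x * q ^ (N + 1) := by ring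
    rw [ih, heineSeries_eq_one_sub hq (x * q ^ N), hshift, sum_range_succ, partialThetaTerm_succ]
    ring

lemma hasSum_partialThetaTerm (hq : ‖q‖ < 1) (x : ℂ) :
    HasSum (partialThetaTerm q x) (heineSeries q x) := by
  have hbdd : ∀ N : ℕ, ‖x * q ^ N‖ ≤ ‖x‖ := fun N ↦ by
    rw [norm_mul, norm_pow]
    exact mul_le_of_le_one_right (norm_nonneg x) (pow_le_one₀ (norm_nonneg q) hq.le)
  have hrem : Tendsto (fun N ↦ partialThetaTerm q x N * heineSeries q (x * q ^ N)) atTop (𝓝 0) :=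
    (summable_partialThetaTerm hq x).tendsto_atTop_zero.zero_mul_isBoundedUnder_le
      (isBoundedUnder_of ⟨_, fun N ↦ norm_heineSeries_le hq (hbdd N)⟩)
  rw [(summable_partialThetaTerm hq x).hasSum_iff_tendsto_nat]
  have hlim := (tendsto_const_nhds (x := heineSeries q x)).sub hrem
  rw [sub_zero] at hlim
  exact hlim.congr fun N ↦ sub_eq_of_eq_add (heineSeries_eq_sum_add hq x N)

lemma qPoch_ne_zero {a : ℂ} (ha : ∀ j : ℕ, a * q ^ j ≠ 1) (n : ℕ) : qPoch q a n ≠ 0 :=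
  prod_ne_zero_iff.mpr fun j _ ↦ sub_ne_zero.mpr (ha j).symm

lemma heineTerm_eq (hq : ‖q‖ < 1) {b : ℂ} (hb : ∀ j : ℕ, b * q ^ j ≠ 1) (n : ℕ) :
    heineTerm q b n =
      qPochInf q q * qPochInf q b * (q ^ n / (qPoch q q n * qPoch q b n)) := by
  rw [qPochInf.eq_qPoch_mul hq q n, qPochInf.eq_qPoch_mul hq b n, heineTerm, ← pow_succ']
  field_simp [qPoch_ne_zero (mul_pow_ne_one_of_norm_lt_one hq) n, qPoch_ne_zero hb n]

end HeineSeries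

/-- Identity (2.9): `∑ (-1)^n b^n q^{n(n-1)/2} = (q,b;q)_∞ ∑ q^n/((q,b;q)_n)`,
both series converging absolutely. -/
theorem heine_limit_case (q b : ℂ) (hq : ‖q‖ < 1)
    (hb : ∀ j : ℕ, b * q ^ j ≠ 1) :
    Summable (fun n : ℕ => (-1 : ℂ) ^ n * b ^ n * q ^ (n * (n - 1) / 2)) ∧
    Summable (fun n : ℕ => q ^ n / (qPoch q q n * qPoch q b n)) ∧
    ∑' n : ℕ, (-1 : ℂ) ^ n * b ^ n * q ^ (n * (n - 1) / 2) =
      qPochInf q q * qPochInf q b * ∑' n : ℕ, q ^ n / (qPoch q q n * qPoch q b n) := by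
  have hC : qPochInf q q * qPochInf q b ≠ 0 :=
    mul_ne_zero (qPochInf.ne_zero hq (mul_pow_ne_one_of_norm_lt_one hq)) (qPochInf.ne_zero hq hb)
  have hRHS : HasSum (fun n ↦ q ^ n / (qPoch q q n * qPoch q b n))
      ((qPochInf q q * qPochInf q b)⁻¹ * heineSeries q b) := by
    refine ((summable_heineTerm hq b).hasSum.mul_left _).congr_fun fun n ↦ ?_
    rw [heineTerm_eq hq hb n, inv_mul_cancel_left₀ hC]
  refine ⟨(hasSum_partialThetaTerm hq b).summable, hRHS.summable, ?_⟩
  rw [hRHS.tsum_eq, mul_inv_cancel_left₀ hC]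
  exact (hasSum_partialThetaTerm hq b).tsum_eq
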